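/- Let n be a positive integer and N = n(n+1)/2. Let Q̂_1, ..., Q̂_N be real symmetric n×n matrices forming an orthonormal basis of the space of real symmetric n×n matrices with respect to the Frobenius inner product ⟨A,B⟩ = trace(AᵀB). Then for all nonnegative reals x_1, ..., x_N, one has Σ_{α,β=1}^N x_α x_β ‖[Q̂_α, Q̂_β]‖² ≤ (Σ_{α=1}^N x_α)². -/

import Mathlib

open Matrix BigOperators

/-- Squared Frobenius norm of a real square matrix. -/
def frobSq {n : ℕ} (A : Matrix (Fin n) (Fin n) ℝ) : ℝ := ∑ i, ∑ j, (A i j) ^ 2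

/-- Frobenius inner product of two real square matrices. -/
def frobInner {n : ℕ} (A B : Matrix (Fin n) (Fin n) ℝ) : ℝ := ∑ i, ∑ j, A i j * B i j

/-- Commutator of two square matrices. -/
def matComm {n : ℕ} (A B : Matrix (Fin n) (Fin n) ℝ) : Matrix (Fin n) (Fin n) ℝ :=
  A * B - B * A

/-!
Fix a symmetric `B` with `‖B‖ = 1` and an orthonormal family `Q_α`, `α ∈ T`, of symmetric
matrices. In an eigenbasis of `B`, with eigenvalues `λ`, one has
`2 ∑_α ‖[B, Q_α]‖² = ∑_{i,j} c_ij (λ_i - λ_j)²` for `c_ij = 2 ∑_α (Q_α)_ij²` (`i ≠ j`).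
Bessel's inequality against `E_ij + E_ji` gives `c_ij ≤ 1`, and `∑ c_ij ≤ 2|T|`, so the
Anderson–Morley bound for the weighted Laplacian `c` yields `∑_α ‖[B, Q_α]‖² ≤ 1 + |T|`.
With `B = Q̂_β` and `T = S \ {β}`, every column of the matrix `C_αβ = ‖[Q̂_α, Q̂_β]‖²`
restricted to a set `S` sums to at most `|S|`. Writing `x = m 𝟙_S + y`, where `S` contains
the support of `x` and `m` is the minimum of `x` on `S`, and inducting on `S` then gives
`xᵀ C x ≤ (∑ x)²`.
-/

open Matrix Finset

section WeightedLaplacian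

variable {ι : Type*} [Fintype ι] {c : ι → ι → ℝ}

lemma sq_sub_le_of_pos {a b p q : ℝ} (hp : 0 < p) (hq : 0 < q) :
    (a - b) ^ 2 ≤ (1 + q / p) * a ^ 2 + (1 + p / q) * b ^ 2 := by
  have hsq : 0 ≤ (q * a + p * b) ^ 2 / (p * q) := by positivity
  have expand : (q * a + p * b) ^ 2 / (p * q) = q / p * a ^ 2 + p / q * b ^ 2 + 2 * a * b := by
    field_simp
    ring
  nlinarith

lemma sum_mul_one_add_div_rowSum_le (hnonneg : ∀ i j, 0 ≤ c i j) {M : ℝ} (hM0 : 0 ≤ M)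
    (hM : ∀ i j, c i j ≠ 0 → ∑ k, c i k + ∑ k, c j k ≤ M) (i : ι) :
    ∑ j, c i j * (1 + (∑ k, c j k) / ∑ k, c i k) ≤ M := by
  set D : ι → ℝ := fun i => ∑ k, c i k
  rcases (sum_nonneg fun k _ => hnonneg i k : 0 ≤ D i).eq_or_lt with hDi | hDi
  · have hci : ∀ j, c i j = 0 := fun j =>
      le_antisymm (hDi ▸ single_le_sum (fun k _ => hnonneg i k) (mem_univ j)) (hnonneg i j)
    simpa [hci] using hM0
  have hcross : ∑ j, c i j * D j ≤ D i * (M - D i) := by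
    rw [show D i * (M - D i) = ∑ j, c i j * (M - D i) from sum_mul ..]
    refine sum_le_sum fun j _ => ?_
    by_cases hc : c i j = 0
    · simp [hc]
    · exact mul_le_mul_of_nonneg_left (by linarith [hM i j hc]) (hnonneg i j)
  calc ∑ j, c i j * (1 + D j / D i) = D i + (∑ j, c i j * D j) / D i := by
        simp only [D, mul_add, mul_one, sum_add_distrib, mul_div_assoc', ← sum_div]
    _ ≤ D i + (M - D i) := by
        gcongr
        rwa [div_le_iff₀' hDi]
    _ = M := by ring

/-- Anderson–Morley bound for a weighted graph Laplacian. -/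
lemma sum_mul_sub_sq_le (hsymm : ∀ i j, c i j = c j i) (hnonneg : ∀ i j, 0 ≤ c i j)
    {M : ℝ} (hM0 : 0 ≤ M) (hM : ∀ i j, c i j ≠ 0 → ∑ k, c i k + ∑ k, c j k ≤ M) (lam : ι → ℝ) :
    ∑ i, ∑ j, c i j * (lam i - lam j) ^ 2 ≤ 2 * M * ∑ i, lam i ^ 2 := by
  set D : ι → ℝ := fun i => ∑ k, c i k
  set w : ι → ι → ℝ := fun i j => c i j * (1 + D j / D i)
  have hpoint : ∀ i j, c i j * (lam i - lam j) ^ 2 ≤ w i j * lam i ^ 2 + w j i * lam j ^ 2 := by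
    intro i j
    rcases (hnonneg i j).eq_or_lt with hc | hc
    · simp [w, ← hc, ← hsymm i j]
    have hD : ∀ i j, c i j ≤ D i := fun i j => single_le_sum (fun k _ => hnonneg i k) (mem_univ j)
    have hDi : 0 < D i := hc.trans_le (hD i j)
    have hDj : 0 < D j := hc.trans_le (hsymm i j ▸ hD j i)
    calc c i j * (lam i - lam j) ^ 2
        ≤ c i j * ((1 + D j / D i) * lam i ^ 2 + (1 + D i / D j) * lam j ^ 2) :=
          mul_le_mul_of_nonneg_left (sq_sub_le_of_pos hDi hDj) hc.le
      _ = w i j * lam i ^ 2 + w j i * lam j ^ 2 := by simp only [w, hsymm j i]; ring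
  calc ∑ i, ∑ j, c i j * (lam i - lam j) ^ 2
      ≤ ∑ i, ∑ j, (w i j * lam i ^ 2 + w j i * lam j ^ 2) :=
        sum_le_sum fun i _ => sum_le_sum fun j _ => hpoint i j
    _ = 2 * ∑ i, lam i ^ 2 * ∑ j, w i j := by
        have hswap : ∑ i, ∑ j, w j i * lam j ^ 2 = ∑ i, ∑ j, w i j * lam i ^ 2 := sum_comm
        rw [sum_congr rfl fun i _ => sum_add_distrib, sum_add_distrib, hswap, ← two_mul]
        simp only [mul_comm (lam _ ^ 2), sum_mul]
    _ ≤ 2 * ∑ i, lam i ^ 2 * M := by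
        gcongr with i
        exact sum_mul_one_add_div_rowSum_le hnonneg hM0 hM i
    _ = 2 * M * ∑ i, lam i ^ 2 := by rw [← sum_mul]; ring

lemma two_mul_rowSum_add_le [DecidableEq ι] (hsymm : ∀ i j, c i j = c j i)
    (hnonneg : ∀ i j, 0 ≤ c i j) (hdiag : ∀ i, c i i = 0) {i j : ι} (hij : i ≠ j) :
    2 * (∑ k, c i k + ∑ k, c j k) ≤ ∑ k, ∑ l, c k l + 2 * c i j := by
  have hsplit : ∀ f : ι → ℝ, ∑ k, f k = f i + f j + ∑ k ∈ {i, j}ᶜ, f k := fun f => by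
    rw [← sum_pair hij, sum_add_sum_compl]
  have hcol : ∀ l, ∑ k ∈ {i, j}ᶜ, c k l = ∑ k, c l k - c i l - c j l := fun l => by
    have hrow : ∑ k, c k l = ∑ k, c l k := sum_congr rfl fun k _ => hsymm k l
    linarith [hsplit fun k => c k l]
  have hrest : ∑ k ∈ {i, j}ᶜ, (c k i + c k j) ≤ ∑ k ∈ {i, j}ᶜ, ∑ l, c k l :=
    sum_le_sum fun k _ => by
      rw [← sum_pair hij]
      exact sum_le_univ_sum_of_nonneg (hnonneg k)
  rw [sum_add_distrib, hcol, hcol, hdiag, hdiag, hsymm j i] at hrest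
  linarith [hsplit fun k => ∑ l, c k l]

lemma sum_mul_sub_sq_le_of_le_one [DecidableEq ι] (hsymm : ∀ i j, c i j = c j i)
    (hnonneg : ∀ i j, 0 ≤ c i j) (hle : ∀ i j, c i j ≤ 1) (hdiag : ∀ i, c i i = 0)
    (lam : ι → ℝ) :
    ∑ i, ∑ j, c i j * (lam i - lam j) ^ 2 ≤ (2 + ∑ i, ∑ j, c i j) * ∑ i, lam i ^ 2 := by
  have hM : ∀ i j, c i j ≠ 0 → ∑ k, c i k + ∑ k, c j k ≤ 1 + (∑ k, ∑ l, c k l) / 2 := by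
    intro i j hcij
    have hij : i ≠ j := fun h => hcij (h ▸ hdiag i)
    linarith [two_mul_rowSum_add_le hsymm hnonneg hdiag hij, hle i j]
  have htotal : 0 ≤ ∑ k, ∑ l, c k l := sum_nonneg fun k _ => sum_nonneg fun l _ => hnonneg k l
  calc _ ≤ 2 * (1 + (∑ k, ∑ l, c k l) / 2) * ∑ i, lam i ^ 2 :=
        sum_mul_sub_sq_le hsymm hnonneg (by positivity) hM lam
    _ = _ := by ring

end WeightedLaplacian

section QuadraticForm

variable {ι : Type*} [Fintype ι] {C : Matrix ι ι ℝ}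

lemma indicator_dotProduct_mulVec_le (hcol : ∀ S : Finset ι, ∀ β ∈ S, ∑ α ∈ S, C α β ≤ #S)
    (S : Finset ι) {v : ι → ℝ} (hv : 0 ≤ v) (hvS : ∀ β ∉ S, v β = 0) :
    (S : Set ι).indicator 1 ⬝ᵥ C *ᵥ v ≤ #S * ∑ β, v β := by
  classical
  calc (S : Set ι).indicator 1 ⬝ᵥ C *ᵥ v = ∑ β, v β * ∑ α ∈ S, C α β := by
        simp only [dotProduct, Set.indicator_apply, mem_coe, Pi.one_apply, ite_mul, one_mul,
          zero_mul, sum_ite_mem, univ_inter, mulVec]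
        rw [sum_comm]
        simp only [mul_sum, mul_comm]
    _ ≤ ∑ β, v β * #S := sum_le_sum fun β _ => by
        by_cases hβ : β ∈ S
        · exact mul_le_mul_of_nonneg_left (hcol S β hβ) (hv β)
        · simp [hvS β hβ]
    _ = #S * ∑ β, v β := by rw [← sum_mul, mul_comm]

lemma dotProduct_mulVec_smul_indicator_add_le (hC : Cᵀ = C)
    (hcol : ∀ S : Finset ι, ∀ β ∈ S, ∑ α ∈ S, C α β ≤ #S) (S : Finset ι) {m : ℝ} (hm : 0 ≤ m)
    {y : ι → ℝ} (hy : 0 ≤ y) (hyS : ∀ γ ∉ S, y γ = 0) (hyy : y ⬝ᵥ C *ᵥ y ≤ (∑ γ, y γ) ^ 2) :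
    let x := m • (S : Set ι).indicator 1 + y
    x ⬝ᵥ C *ᵥ x ≤ (∑ γ, x γ) ^ 2 := by
  classical
  set e : ι → ℝ := (S : Set ι).indicator 1
  have hesum : ∑ γ, e γ = #S := by simp [e, Set.indicator_apply]
  have hee : e ⬝ᵥ C *ᵥ e ≤ #S * #S := by
    simpa [hesum] using indicator_dotProduct_mulVec_le hcol S (v := e)
      (Set.indicator_nonneg fun _ _ => zero_le_one) (fun γ hγ => by simp [e, hγ])
  have hey : e ⬝ᵥ C *ᵥ y ≤ #S * ∑ γ, y γ := indicator_dotProduct_mulVec_le hcol S hy hyS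
  have hye : y ⬝ᵥ C *ᵥ e = e ⬝ᵥ C *ᵥ y := by
    rw [dotProduct_mulVec, ← mulVec_transpose, hC, dotProduct_comm]
  calc (m • e + y) ⬝ᵥ C *ᵥ (m • e + y)
      = m ^ 2 * (e ⬝ᵥ C *ᵥ e) + 2 * m * (e ⬝ᵥ C *ᵥ y) + y ⬝ᵥ C *ᵥ y := by
        simp only [mulVec_add, mulVec_smul, dotProduct_add, add_dotProduct, dotProduct_smul,
          smul_dotProduct, hye, smul_eq_mul]
        ring
    _ ≤ m ^ 2 * (#S * #S) + 2 * m * (#S * ∑ γ, y γ) + (∑ γ, y γ) ^ 2 := by gcongr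
    _ = (∑ γ, (m • e + y) γ) ^ 2 := by
        simp only [Pi.add_apply, Pi.smul_apply, smul_eq_mul, sum_add_distrib, ← mul_sum, hesum]
        ring

lemma dotProduct_mulVec_le_sq_sum (hC : Cᵀ = C)
    (hcol : ∀ S : Finset ι, ∀ β ∈ S, ∑ α ∈ S, C α β ≤ #S) {x : ι → ℝ} (hx : 0 ≤ x) :
    x ⬝ᵥ C *ᵥ x ≤ (∑ α, x α) ^ 2 := by
  classical
  suffices ∀ S : Finset ι, ∀ x : ι → ℝ, 0 ≤ x → (∀ γ ∉ S, x γ = 0) →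
      x ⬝ᵥ C *ᵥ x ≤ (∑ α, x α) ^ 2 from this univ x hx (by simp)
  intro S
  induction S using Finset.strongInduction with | H S ih => ?_
  intro x hx hxS
  rcases S.eq_empty_or_nonempty with rfl | hS
  · have hx0 : x = 0 := funext fun γ => hxS γ (notMem_empty γ)
    simp [hx0]
  obtain ⟨α₀, hα₀, hmin⟩ := S.exists_min_image x hS
  set m := x α₀
  set y := x - m • (S : Set ι).indicator 1
  have hy : 0 ≤ y := fun γ => by
    by_cases hγ : γ ∈ S
    · simpa [y, hγ] using hmin γ hγ
    · simp [y, hγ, hxS γ hγ]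
  have hyS : ∀ γ ∉ S.erase α₀, y γ = 0 := fun γ hγ => by
    by_cases hγα : γ = α₀
    · simp [y, m, hγα, hα₀]
    · have hγS : γ ∉ S := fun h => hγ (mem_erase.2 ⟨hγα, h⟩)
      simp [y, hγS, hxS γ hγS]
  have hxy : x = m • (S : Set ι).indicator 1 + y := by simp [y]
  rw [hxy]
  exact dotProduct_mulVec_smul_indicator_add_le hC hcol S (hx α₀) hy
    (fun γ hγ => hyS γ fun h => hγ (mem_of_mem_erase h)) (ih _ (erase_ssubset hα₀) y hy hyS)

end QuadraticForm

section Matrices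

variable {n : ℕ}

lemma frobSq_eq_frobInner (A : Matrix (Fin n) (Fin n) ℝ) : frobSq A = frobInner A A := by
  simp only [frobSq, frobInner, sq]

lemma frobInner_eq_trace (A B : Matrix (Fin n) (Fin n) ℝ) : frobInner A B = trace (Aᵀ * B) := by
  simp only [frobInner, trace, Matrix.diag, mul_apply, transpose_apply]
  exact sum_comm

lemma frobInner_conj {U : Matrix (Fin n) (Fin n) ℝ} (hU : U * Uᵀ = 1)
    (A B : Matrix (Fin n) (Fin n) ℝ) :
    frobInner (Uᵀ * A * U) (Uᵀ * B * U) = frobInner A B := by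
  simp only [frobInner_eq_trace, transpose_mul, transpose_transpose, Matrix.mul_assoc]
  rw [← Matrix.mul_assoc U, hU, Matrix.one_mul, trace_mul_comm, Matrix.mul_assoc,
    Matrix.mul_assoc, hU, Matrix.mul_one]

lemma matComm_conj {U : Matrix (Fin n) (Fin n) ℝ} (hU : U * Uᵀ = 1)
    (A B : Matrix (Fin n) (Fin n) ℝ) :
    matComm (Uᵀ * A * U) (Uᵀ * B * U) = Uᵀ * matComm A B * U := by
  simp only [matComm, Matrix.mul_sub, Matrix.sub_mul, Matrix.mul_assoc]
  rw [← Matrix.mul_assoc U Uᵀ, hU, Matrix.one_mul, ← Matrix.mul_assoc U Uᵀ, hU, Matrix.one_mul]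

lemma frobSq_neg (A : Matrix (Fin n) (Fin n) ℝ) : frobSq (-A) = frobSq A := by
  simp [frobSq]

lemma frobSq_matComm_comm (A B : Matrix (Fin n) (Fin n) ℝ) :
    frobSq (matComm A B) = frobSq (matComm B A) := by
  rw [← frobSq_neg, matComm, matComm, neg_sub]

lemma frobSq_matComm_self (A : Matrix (Fin n) (Fin n) ℝ) : frobSq (matComm A A) = 0 := by
  simp [matComm, frobSq]

def frobVec (A : Matrix (Fin n) (Fin n) ℝ) : EuclideanSpace ℝ (Fin n × Fin n) :=
  WithLp.toLp 2 fun p => A p.1 p.2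

lemma inner_frobVec (A B : Matrix (Fin n) (Fin n) ℝ) :
    inner ℝ (frobVec A) (frobVec B) = frobInner A B := by
  simp only [frobVec, PiLp.inner_apply, RCLike.inner_apply, conj_trivial, frobInner,
    Fintype.sum_prod_type, mul_comm]

lemma sum_frobInner_sq_le {ι : Type*} [DecidableEq ι] {Q : ι → Matrix (Fin n) (Fin n) ℝ}
    (horth : ∀ α β, frobInner (Q α) (Q β) = if α = β then 1 else 0)
    (s : Finset ι) (E : Matrix (Fin n) (Fin n) ℝ) :
    ∑ α ∈ s, frobInner (Q α) E ^ 2 ≤ frobSq E := by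
  have hQ : Orthonormal ℝ (frobVec ∘ Q) :=
    orthonormal_iff_ite.2 fun α β => by simp only [Function.comp, inner_frobVec, horth]
  have hbessel := hQ.sum_inner_products_le (x := frobVec E) (s := s)
  rw [← real_inner_self_eq_norm_sq, inner_frobVec] at hbessel
  simpa only [Function.comp, inner_frobVec, Real.norm_eq_abs, sq_abs, frobSq_eq_frobInner]
    using hbessel

lemma frobSq_matComm_diagonal (d : Fin n → ℝ) (X : Matrix (Fin n) (Fin n) ℝ) :
    frobSq (matComm (diagonal d) X) = ∑ i, ∑ j, (d i - d j) ^ 2 * X i j ^ 2 := by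
  simp only [frobSq, matComm, Matrix.sub_apply, diagonal_mul, mul_diagonal]
  exact sum_congr rfl fun i _ => sum_congr rfl fun j _ => by ring

lemma frobInner_single_add_single {X : Matrix (Fin n) (Fin n) ℝ} (hX : Xᵀ = X) (i j : Fin n) :
    frobInner X (single i j 1 + single j i 1) = 2 * X i j := by
  have hji : X j i = X i j := by rw [← transpose_apply X i j, hX]
  simp [frobInner, single_apply, mul_add, sum_add_distrib, ite_and, hji, two_mul]

lemma frobSq_single_add_single {i j : Fin n} (hij : i ≠ j) :
    frobSq (single i j (1 : ℝ) + single j i 1) = 2 := by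
  norm_num [frobSq, single_apply, add_sq, sum_add_distrib, ite_and, hij.symm]

lemma two_mul_sum_sq_apply_le_one {ι : Type*} [DecidableEq ι] {Q : ι → Matrix (Fin n) (Fin n) ℝ}
    (hsymm : ∀ α, (Q α)ᵀ = Q α)
    (horth : ∀ α β, frobInner (Q α) (Q β) = if α = β then 1 else 0)
    (s : Finset ι) {i j : Fin n} (hij : i ≠ j) :
    2 * ∑ α ∈ s, Q α i j ^ 2 ≤ 1 := by
  have hbessel := sum_frobInner_sq_le horth s (single i j 1 + single j i 1)
  simp only [frobInner_single_add_single (hsymm _), frobSq_single_add_single hij, mul_pow,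
    ← mul_sum] at hbessel
  linarith

lemma frobSq_diagonal (d : Fin n → ℝ) : frobSq (diagonal d) = ∑ i, d i ^ 2 := by
  simp [frobSq, diagonal_apply, ite_pow]

section RowBound

variable {ι : Type*} {Q : ι → Matrix (Fin n) (Fin n) ℝ}

-- The diagonal is irrelevant in `∑ c_ij (λ_i - λ_j)²`; it is set to `0` so that `c_ij ≠ 0`
-- forces `i ≠ j`, as the Anderson–Morley bound requires.
def entryWeight (Q : ι → Matrix (Fin n) (Fin n) ℝ) (T : Finset ι) (i j : Fin n) : ℝ :=
  if i = j then 0 else 2 * ∑ α ∈ T, Q α i j ^ 2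

lemma entryWeight_self (T : Finset ι) (i : Fin n) : entryWeight Q T i i = 0 := if_pos rfl

lemma entryWeight_nonneg (T : Finset ι) (i j : Fin n) : 0 ≤ entryWeight Q T i j := by
  unfold entryWeight
  split_ifs <;> positivity

lemma entryWeight_le (T : Finset ι) (i j : Fin n) :
    entryWeight Q T i j ≤ 2 * ∑ α ∈ T, Q α i j ^ 2 := by
  unfold entryWeight
  split_ifs
  · positivity
  · exact le_rfl

lemma entryWeight_comm (hsymm : ∀ α, (Q α)ᵀ = Q α) (T : Finset ι) (i j : Fin n) :
    entryWeight Q T i j = entryWeight Q T j i := by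
  have hQ : ∀ α, Q α j i = Q α i j := fun α => by rw [← transpose_apply (Q α) i j, hsymm]
  simp only [entryWeight, eq_comm (a := i), hQ]

lemma entryWeight_le_one [DecidableEq ι] (hsymm : ∀ α, (Q α)ᵀ = Q α)
    (horth : ∀ α β, frobInner (Q α) (Q β) = if α = β then 1 else 0)
    (T : Finset ι) (i j : Fin n) : entryWeight Q T i j ≤ 1 := by
  unfold entryWeight
  split_ifs with hij
  · exact zero_le_one
  · exact two_mul_sum_sq_apply_le_one hsymm horth T hij

lemma sum_entryWeight_le (hnorm : ∀ α, frobSq (Q α) = 1) (T : Finset ι) :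
    ∑ i, ∑ j, entryWeight Q T i j ≤ 2 * #T :=
  calc ∑ i, ∑ j, entryWeight Q T i j ≤ ∑ i, ∑ j, 2 * ∑ α ∈ T, Q α i j ^ 2 := by
        gcongr with i _ j _
        exact entryWeight_le T i j
    _ = 2 * ∑ α ∈ T, frobSq (Q α) := by
        simp only [frobSq, ← mul_sum]
        exact congrArg _ ((sum_congr rfl fun i _ => sum_comm).trans sum_comm)
    _ = 2 * #T := by simp [hnorm]

lemma two_mul_sum_frobSq_matComm_diagonal (d : Fin n → ℝ) (T : Finset ι) :
    2 * ∑ α ∈ T, frobSq (matComm (diagonal d) (Q α))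
      = ∑ i, ∑ j, entryWeight Q T i j * (d i - d j) ^ 2 := by
  simp only [frobSq_matComm_diagonal, mul_sum]
  rw [sum_comm]
  refine sum_congr rfl fun i _ => ?_
  rw [sum_comm]
  refine sum_congr rfl fun j _ => ?_
  by_cases hij : i = j
  · simp [hij]
  · simp only [entryWeight, hij, if_false, mul_sum, sum_mul]
    exact sum_congr rfl fun α _ => by ring

lemma sum_frobSq_matComm_diagonal_le [DecidableEq ι] (hsymm : ∀ α, (Q α)ᵀ = Q α)
    (horth : ∀ α β, frobInner (Q α) (Q β) = if α = β then 1 else 0)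
    {d : Fin n → ℝ} (hd : ∑ i, d i ^ 2 = 1) (T : Finset ι) :
    ∑ α ∈ T, frobSq (matComm (diagonal d) (Q α)) ≤ 1 + #T := by
  have hlap := sum_mul_sub_sq_le_of_le_one (entryWeight_comm hsymm T) (entryWeight_nonneg T)
    (entryWeight_le_one hsymm horth T) (entryWeight_self T) d
  rw [hd, ← two_mul_sum_frobSq_matComm_diagonal] at hlap
  have htotal : ∑ i, ∑ j, entryWeight Q T i j ≤ 2 * #T :=
    sum_entryWeight_le (fun α => by rw [frobSq_eq_frobInner, horth, if_pos rfl]) T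
  linarith

lemma sum_frobSq_matComm_le [DecidableEq ι] (hsymm : ∀ α, (Q α)ᵀ = Q α)
    (horth : ∀ α β, frobInner (Q α) (Q β) = if α = β then 1 else 0)
    {B : Matrix (Fin n) (Fin n) ℝ} (hB : Bᵀ = B) (hBnorm : frobSq B = 1) (T : Finset ι) :
    ∑ α ∈ T, frobSq (matComm B (Q α)) ≤ 1 + #T := by
  have hBherm : B.IsHermitian := by rwa [IsHermitian, conjTranspose_eq_transpose_of_trivial]
  set U : Matrix (Fin n) (Fin n) ℝ := (hBherm.eigenvectorUnitary : Matrix (Fin n) (Fin n) ℝ)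
  have hU : U * Uᵀ = 1 := by
    simpa [U, star_eq_conjTranspose] using Unitary.mul_star_self_of_mem hBherm.eigenvectorUnitary.2
  have hdiag : Uᵀ * B * U = diagonal hBherm.eigenvalues := by
    simpa [U, Unitary.conjStarAlgAut_star_apply, star_eq_conjTranspose] using
      hBherm.conjStarAlgAut_star_eigenvectorUnitary
  have hconj : ∀ α, frobSq (matComm B (Q α))
      = frobSq (matComm (diagonal hBherm.eigenvalues) (Uᵀ * Q α * U)) := fun α => by
    rw [← hdiag, matComm_conj hU, frobSq_eq_frobInner, frobSq_eq_frobInner, frobInner_conj hU]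
  have heig : ∑ i, hBherm.eigenvalues i ^ 2 = 1 := by
    rw [← frobSq_diagonal, ← hdiag, frobSq_eq_frobInner, frobInner_conj hU, ← frobSq_eq_frobInner,
      hBnorm]
  simp only [hconj]
  refine sum_frobSq_matComm_diagonal_le (fun α => ?_) (fun α β => ?_) heig T
  · rw [transpose_mul, transpose_mul, transpose_transpose, hsymm, Matrix.mul_assoc]
  · rw [frobInner_conj hU, horth]

lemma sum_frobSq_matComm_le_card [DecidableEq ι] (hsymm : ∀ α, (Q α)ᵀ = Q α)
    (horth : ∀ α β, frobInner (Q α) (Q β) = if α = β then 1 else 0)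
    {S : Finset ι} {β : ι} (hβ : β ∈ S) :
    ∑ α ∈ S, frobSq (matComm (Q α) (Q β)) ≤ #S := by
  have hbound := sum_frobSq_matComm_le hsymm horth (hsymm β)
    (by rw [frobSq_eq_frobInner, horth, if_pos rfl]) (S.erase β)
  rw [card_erase_of_mem hβ, Nat.cast_pred (card_pos.2 ⟨β, hβ⟩)] at hbound
  rw [← sum_erase_add _ _ hβ, frobSq_matComm_self]
  simp only [frobSq_matComm_comm _ (Q β)]
  linarith

end RowBound

end Matrices

theorem ddvv_polynomial_form_general (n : ℕ)
    (Qhat : Fin (n * (n + 1) / 2) → Matrix (Fin n) (Fin n) ℝ)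
    (hsymm : ∀ α, (Qhat α)ᵀ = Qhat α)
    (horth : ∀ α β, frobInner (Qhat α) (Qhat β) = if α = β then 1 else 0)
    (x : Fin (n * (n + 1) / 2) → ℝ) (hx : ∀ α, 0 ≤ x α) :
    ∑ α, ∑ β, x α * x β * frobSq (matComm (Qhat α) (Qhat β)) ≤ (∑ α, x α) ^ 2 := by
  let C : Matrix (Fin (n * (n + 1) / 2)) (Fin (n * (n + 1) / 2)) ℝ :=
    of fun α β => frobSq (matComm (Qhat α) (Qhat β))
  have hC : Cᵀ = C := ext fun α β => frobSq_matComm_comm _ _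
  calc ∑ α, ∑ β, x α * x β * frobSq (matComm (Qhat α) (Qhat β)) = x ⬝ᵥ C *ᵥ x := by
        simp only [dotProduct, mulVec, mul_sum, C, of_apply]
        exact sum_congr rfl fun α _ => sum_congr rfl fun β _ => by ring
    _ ≤ (∑ α, x α) ^ 2 :=
        dotProduct_mulVec_le_sq_sum hC (fun S β hβ => sum_frobSq_matComm_le_card hsymm horth hβ) hx

/-- The polynomial form of the DDVV inequality along an orthonormal basis of the
space of real symmetric `n × n` matrices. -/
theorem ddvv_polynomial_form (n : ℕ) (hn : 0 < n)
    (Qhat : Fin (n * (n + 1) / 2) → Matrix (Fin n) (Fin n) ℝ)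
    (hsymm : ∀ α, (Qhat α)ᵀ = Qhat α)
    (horth : ∀ α β, frobInner (Qhat α) (Qhat β) = if α = β then 1 else 0)
    (hspan : ∀ A : Matrix (Fin n) (Fin n) ℝ, Aᵀ = A →
      ∃ c : Fin (n * (n + 1) / 2) → ℝ, A = ∑ α, c α • Qhat α)
    (x : Fin (n * (n + 1) / 2) → ℝ) (hx : ∀ α, 0 ≤ x α) :
    ∑ α, ∑ β, x α * x β * frobSq (matComm (Qhat α) (Qhat β)) ≤ (∑ α, x α) ^ 2 :=
  ddvv_polynomial_form_general n Qhat hsymm horth x hx
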